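/- arXiv:2502.11869 — 2 statements merged into one kernel-verified Lean document; each statement's English description precedes it below -/
import Mathlib

section
/- Let F and G be k-uniform hypergraphs and let H be an n-vertex k-uniform hypergraph whose edge set is partitioned into pairwise edge-disjoint copies of F (each copy given a distinct color). Then the number of non-rainbow copies of G in H (copies containing two edges of the same color) is at most C·n^{v(G)-1} for some constant C depending only on F and G. -/
open Finset

attribute [local instance] Classical.propDecidable

/-- `C` is a copy of the hypergraph `F` (viewed as an edge set). -/
def IsCopy {α β : Type} [DecidableEq α] [DecidableEq β]
    (F : Finset (Finset α)) (C : Finset (Finset β)) : Prop :=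
  ∃ φ : α → β, Set.InjOn φ ↑(F.sup id) ∧ C = F.image (Finset.image φ)

/-- If the edges of an `n`-vertex `k`-uniform hypergraph are partitioned into pairwise
edge-disjoint copies of `F` (each copy a color class), then the number of non-rainbow
copies of `G` (copies containing two distinct edges of the same color) is at most
`C · n ^ (v(G) - 1)` for a constant `C` depending only on `F` and `G`. -/
theorem stmt1 (k : ℕ) (F G : Finset (Finset ℕ))
    (hFu : ∀ e ∈ F, e.card = k) (hGu : ∀ e ∈ G, e.card = k) :
    ∃ C : ℕ, 0 < C ∧
      ∀ (n : ℕ) (𝒞 : Finset (Finset (Finset (Fin n)))),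
        (∀ A ∈ 𝒞, IsCopy F A) →
        (↑𝒞 : Set (Finset (Finset (Fin n)))).Pairwise Disjoint →
        (((𝒞.sup id).powerset.filter (fun D =>
            IsCopy G D ∧
              ∃ e₁ ∈ D, ∃ e₂ ∈ D, e₁ ≠ e₂ ∧ ∃ A ∈ 𝒞, e₁ ∈ A ∧ e₂ ∈ A)).card : ℕ)
          ≤ C * n ^ ((G.sup id).card - 1) := by
  classical
  refine ⟨G.card * G.card * ((F.sup id).card + 1) ^ (2 * k) + 1, Nat.succ_pos _, ?_⟩
  intro n 𝒞 hcopy hdisj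
  set E := 𝒞.sup id with hE
  set V := G.sup id with hV
  set S := E.powerset.filter (fun D =>
      IsCopy G D ∧
        ∃ e₁ ∈ D, ∃ e₂ ∈ D, e₁ ≠ e₂ ∧ ∃ A ∈ 𝒞, e₁ ∈ A ∧ e₂ ∈ A) with hS
  show S.card ≤ _
  rcases S.eq_empty_or_nonempty with h0 | hne
  · rw [h0]
    simp
  have subV : ∀ f ∈ G, f ⊆ V := fun f hf x hx => Finset.mem_sup.mpr ⟨f, hf, hx⟩
  -- every edge of the host graph has k vertices
  have hedge : ∀ e ∈ E, e.card = k := by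
    intro e he
    rw [hE, Finset.mem_sup] at he
    obtain ⟨A, hA, heA⟩ := he
    obtain ⟨φ, hinj, hAeq⟩ := hcopy A hA
    rw [hAeq] at heA
    obtain ⟨f, hf, rfl⟩ := Finset.mem_image.mp heA
    have hfsub : f ⊆ F.sup id := fun x hx => Finset.mem_sup.mpr ⟨f, hf, hx⟩
    rw [Finset.card_image_of_injOn (hinj.mono (Finset.coe_subset.mpr hfsub)), hFu f hf]
  -- extract data for each bad copy
  have hmem : ∀ D ∈ S, ∃ (φ : ℕ → Fin n) (f₁ f₂ : Finset ℕ) (e₁ e₂ : Finset (Fin n))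
      (A : Finset (Finset (Fin n))),
      f₁ ∈ G ∧ f₂ ∈ G ∧ e₁ ∈ E ∧ A ∈ 𝒞 ∧ e₁ ∈ A ∧ e₂ ∈ A ∧
      f₁.image φ = e₁ ∧ f₂.image φ = e₂ ∧
      D = G.image (Finset.image φ) ∧
      k + 1 ≤ (e₁ ∪ e₂).card ∧ k + 1 ≤ (f₁ ∪ f₂).card := by
    intro D hD
    rw [hS, Finset.mem_filter, Finset.mem_powerset] at hD
    obtain ⟨hDE, ⟨φ, hinj, hDeq⟩, e₁, he₁, e₂, he₂, hne12, A, hA, he₁A, he₂A⟩ := hD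
    have he₁' := he₁
    rw [hDeq] at he₁' 
    have he₂' := he₂
    rw [hDeq] at he₂'
    obtain ⟨f₁, hf₁, hf₁e⟩ := Finset.mem_image.mp he₁'
    obtain ⟨f₂, hf₂, hf₂e⟩ := Finset.mem_image.mp he₂'
    have hcard1 : e₁.card = k := by
      rw [← hf₁e, Finset.card_image_of_injOn
        (hinj.mono (Finset.coe_subset.mpr (subV f₁ hf₁))), hGu f₁ hf₁]
    have hcard2 : e₂.card = k := by
      rw [← hf₂e, Finset.card_image_of_injOn
        (hinj.mono (Finset.coe_subset.mpr (subV f₂ hf₂))), hGu f₂ hf₂]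
    have hcu : k + 1 ≤ (e₁ ∪ e₂).card := by
      by_contra hlt
      push_neg at hlt
      have h1 : e₁ = e₁ ∪ e₂ :=
        Finset.eq_of_subset_of_card_le Finset.subset_union_left (by omega)
      have h21 : e₂ ⊆ e₁ := by
        rw [h1]
        exact Finset.subset_union_right
      have h2 : e₂ = e₁ := Finset.eq_of_subset_of_card_le h21 (by omega)
      exact hne12 h2.symm
    have hfu : k + 1 ≤ (f₁ ∪ f₂).card := by
      have himg : e₁ ∪ e₂ = (f₁ ∪ f₂).image φ := by
        rw [Finset.image_union, hf₁e, hf₂e]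
      calc k + 1 ≤ (e₁ ∪ e₂).card := hcu
        _ = ((f₁ ∪ f₂).image φ).card := by rw [himg]
        _ ≤ (f₁ ∪ f₂).card := Finset.card_image_le
    exact ⟨φ, f₁, f₂, e₁, e₂, A, hf₁, hf₂, hDE he₁, hA, he₁A, he₂A, hf₁e, hf₂e, hDeq, hcu, hfu⟩
  -- global bounds from a witness
  obtain ⟨D₀, hD₀⟩ := hne
  obtain ⟨φ₀, f₁₀, f₂₀, e₁₀, e₂₀, A₀, hf₁₀, hf₂₀, _, _, _, _, _, _, _, hcu₀, hfu₀⟩ :=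
    hmem D₀ hD₀
  have hn : k + 1 ≤ n := by
    calc k + 1 ≤ (e₁₀ ∪ e₂₀).card := hcu₀
      _ ≤ Fintype.card (Fin n) := Finset.card_le_univ _
      _ = n := Fintype.card_fin n
  have hn0 : 0 < n := by omega
  have hv : k + 1 ≤ V.card := by
    calc k + 1 ≤ (f₁₀ ∪ f₂₀).card := hfu₀
      _ ≤ V.card := Finset.card_le_card
            (Finset.union_subset (subV f₁₀ hf₁₀) (subV f₂₀ hf₂₀))
  -- the color class of an edge
  set U : Finset (Fin n) → Finset (Fin n) := fun e =>
    if h : ∃ A ∈ 𝒞, e ∈ A then h.choose.sup id else ∅ with hUdef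
  have hU : ∀ A ∈ 𝒞, ∀ e ∈ A, U e = A.sup id := by
    intro A hA e heA
    have hex : ∃ A ∈ 𝒞, e ∈ A := ⟨A, hA, heA⟩
    have hch := hex.choose_spec
    have hchA : hex.choose = A := by
      by_contra hne'
      exact (Finset.disjoint_left.mp (hdisj hch.1 hA hne')) hch.2 heA
    rw [hUdef]
    simp only [dif_pos hex, hchA]
  have hUcard : ∀ e ∈ E, (U e).card ≤ (F.sup id).card := by
    intro e he
    rw [hE, Finset.mem_sup] at he
    obtain ⟨A, hA, heA⟩ := he
    rw [hU A hA e heA]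
    obtain ⟨φ, hinj, hAeq⟩ := hcopy A hA
    have hsub : A.sup id ⊆ (F.sup id).image φ := by
      intro x hx
      rw [hAeq, Finset.mem_sup] at hx
      obtain ⟨e', he', hxe⟩ := hx
      obtain ⟨f, hf, rfl⟩ := Finset.mem_image.mp he'
      obtain ⟨y, hy, rfl⟩ := Finset.mem_image.mp hxe
      exact Finset.mem_image_of_mem φ (Finset.mem_sup.mpr ⟨f, hf, hy⟩)
    exact le_trans (Finset.card_le_card hsub) Finset.card_image_le
  -- the index set for the counting
  set Q := (G ×ˢ G ×ˢ E).filter (fun q => k + 1 ≤ (q.1 ∪ q.2.1).card) with hQ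
  set T := Q.sigma (fun q => V.pi (fun x =>
    if x ∈ q.1 ∪ q.2.1 then U q.2.2 else (Finset.univ : Finset (Fin n)))) with hT
  have key : ∀ D ∈ S, ∃ p : (Finset ℕ × Finset ℕ × Finset (Fin n)) × (ℕ → Fin n),
      p.1 ∈ Q ∧
      (∀ x ∈ V, p.2 x ∈ (if x ∈ p.1.1 ∪ p.1.2.1 then U p.1.2.2
          else (Finset.univ : Finset (Fin n)))) ∧
      D = G.image (Finset.image p.2) := by
    intro D hD
    obtain ⟨φ, f₁, f₂, e₁, e₂, A, hf₁, hf₂, he₁E, hA, he₁A, he₂A, hf₁e, hf₂e, hDeq, hcu, hfu⟩ :=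
      hmem D hD
    refine ⟨⟨(f₁, f₂, e₁), φ⟩, ?_, ?_, hDeq⟩
    · rw [hQ, Finset.mem_filter, Finset.mem_product, Finset.mem_product]
      exact ⟨⟨hf₁, hf₂, he₁E⟩, hfu⟩
    · intro x hx
      by_cases hxw : x ∈ f₁ ∪ f₂
      · rw [if_pos hxw, hU A hA e₁ he₁A]
        rcases Finset.mem_union.mp hxw with hx1 | hx2
        · refine Finset.mem_sup.mpr ⟨e₁, he₁A, ?_⟩
          rw [← hf₁e]
          exact Finset.mem_image_of_mem φ hx1
        · refine Finset.mem_sup.mpr ⟨e₂, he₂A, ?_⟩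
          rw [← hf₂e]
          exact Finset.mem_image_of_mem φ hx2
      · rw [if_neg hxw]
        exact Finset.mem_univ _
  -- the injection
  set ι : Finset (Finset (Fin n)) →
      (Σ _q : Finset ℕ × Finset ℕ × Finset (Fin n), (∀ x ∈ V, Fin n)) :=
    fun D => if h : D ∈ S then ⟨(key D h).choose.1, fun x _ => (key D h).choose.2 x⟩
             else ⟨(∅, ∅, ∅), fun _ _ => ⟨0, hn0⟩⟩ with hι
  have hmap : ∀ D ∈ S, ι D ∈ T := by
    intro D hD
    rw [hι]
    simp only [dif_pos hD]
    obtain ⟨hQmem, hpi, -⟩ := (key D hD).choose_spec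
    rw [hT, Finset.mem_sigma]
    exact ⟨hQmem, Finset.mem_pi.mpr (fun x hx => hpi x hx)⟩
  have hinjOn : Set.InjOn ι ↑S := by
    intro D₁ hD₁ D₂ hD₂ heq
    rw [Finset.mem_coe] at hD₁ hD₂
    rw [hι] at heq
    simp only [dif_pos hD₁, dif_pos hD₂] at heq
    have h2 : (fun x (_ : x ∈ V) => (key D₁ hD₁).choose.2 x)
        = (fun x (_ : x ∈ V) => (key D₂ hD₂).choose.2 x) := by
      have := congrArg Sigma.snd heq
      exact this
    obtain ⟨-, -, hDeq₁⟩ := (key D₁ hD₁).choose_spec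
    obtain ⟨-, -, hDeq₂⟩ := (key D₂ hD₂).choose_spec
    rw [hDeq₁, hDeq₂]
    apply Finset.image_congr
    intro f hf
    apply Finset.image_congr
    intro x hx
    have hxV : x ∈ V := subV f hf hx
    exact congrFun (congrFun h2 x) hxV
  have hcount : S.card ≤ T.card := Finset.card_le_card_of_injOn ι hmap hinjOn
  rw [hT, Finset.card_sigma] at hcount
  -- bound each term of the sum
  have hterm : ∀ q ∈ Q,
      (V.pi (fun x => if x ∈ q.1 ∪ q.2.1 then U q.2.2
          else (Finset.univ : Finset (Fin n)))).card
        ≤ ((F.sup id).card + 1) ^ (2 * k) * n ^ (V.card - (k + 1)) := by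
    intro q hq
    rw [hQ, Finset.mem_filter, Finset.mem_product] at hq
    obtain ⟨⟨hq1, hq23⟩, hqc⟩ := hq
    rw [Finset.mem_product] at hq23
    obtain ⟨hq2, hq3⟩ := hq23
    have hWV : q.1 ∪ q.2.1 ⊆ V := Finset.union_subset (subV _ hq1) (subV _ hq2)
    rw [Finset.card_pi]
    have hsplit : ∏ x ∈ V, (if x ∈ q.1 ∪ q.2.1 then U q.2.2
          else (Finset.univ : Finset (Fin n))).card
        = n ^ (V.card - (q.1 ∪ q.2.1).card) * (U q.2.2).card ^ (q.1 ∪ q.2.1).card := by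
      rw [← Finset.prod_sdiff hWV]
      congr 1
      · rw [Finset.prod_congr rfl (fun x hx => by
          rw [if_neg (Finset.mem_sdiff.mp hx).2]), Finset.prod_const,
          Finset.card_univ, Fintype.card_fin, Finset.card_sdiff_of_subset hWV]
      · rw [Finset.prod_congr rfl (fun x hx => by rw [if_pos hx]), Finset.prod_const]
    rw [hsplit]
    have hW2k : (q.1 ∪ q.2.1).card ≤ 2 * k := by
      have := Finset.card_union_le q.1 q.2.1
      have h1 := hGu q.1 hq1
      have h2 := hGu q.2.1 hq2
      omega
    have hUb := hUcard q.2.2 hq3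
    calc n ^ (V.card - (q.1 ∪ q.2.1).card) * (U q.2.2).card ^ (q.1 ∪ q.2.1).card
        ≤ n ^ (V.card - (k + 1)) * ((F.sup id).card + 1) ^ (2 * k) := by
          apply Nat.mul_le_mul
          · exact Nat.pow_le_pow_right hn0 (Nat.sub_le_sub_left hqc _)
          · calc (U q.2.2).card ^ (q.1 ∪ q.2.1).card
                ≤ ((F.sup id).card + 1) ^ (q.1 ∪ q.2.1).card :=
                  Nat.pow_le_pow_left (by omega) _
              _ ≤ ((F.sup id).card + 1) ^ (2 * k) :=
                  Nat.pow_le_pow_right (Nat.succ_le_succ (Nat.zero_le _)) hW2k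
      _ = ((F.sup id).card + 1) ^ (2 * k) * n ^ (V.card - (k + 1)) := Nat.mul_comm _ _
  have hsum : ∑ q ∈ Q, (V.pi (fun x => if x ∈ q.1 ∪ q.2.1 then U q.2.2
          else (Finset.univ : Finset (Fin n)))).card
      ≤ Q.card * (((F.sup id).card + 1) ^ (2 * k) * n ^ (V.card - (k + 1))) := by
    calc ∑ q ∈ Q, (V.pi (fun x => if x ∈ q.1 ∪ q.2.1 then U q.2.2
          else (Finset.univ : Finset (Fin n)))).card
        ≤ Q.card • (((F.sup id).card + 1) ^ (2 * k) * n ^ (V.card - (k + 1))) :=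
          Finset.sum_le_card_nsmul _ _ _ hterm
      _ = _ := by rw [smul_eq_mul]
  have hEcard : E.card ≤ n ^ k := by
    have hsub : E ⊆ Finset.univ.powersetCard k := by
      intro e he
      rw [Finset.mem_powersetCard]
      exact ⟨Finset.subset_univ e, hedge e he⟩
    calc E.card ≤ (Finset.univ.powersetCard k).card := Finset.card_le_card hsub
      _ = (Fintype.card (Fin n)).choose k := by
          rw [Finset.card_powersetCard, Finset.card_univ]
      _ = n.choose k := by rw [Fintype.card_fin]
      _ ≤ n ^ k := Nat.choose_le_pow n k
  have hQcard : Q.card ≤ G.card * G.card * n ^ k := by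
    calc Q.card ≤ (G ×ˢ G ×ˢ E).card := Finset.card_filter_le _ _
      _ = G.card * (G.card * E.card) := by rw [Finset.card_product, Finset.card_product]
      _ ≤ G.card * (G.card * n ^ k) := by
          exact Nat.mul_le_mul_left _ (Nat.mul_le_mul_left _ hEcard)
      _ = G.card * G.card * n ^ k := by ring
  have hpow : n ^ k * n ^ (V.card - (k + 1)) = n ^ (V.card - 1) := by
    rw [← pow_add]
    congr 1
    omega
  calc S.card ≤ ∑ q ∈ Q, (V.pi (fun x => if x ∈ q.1 ∪ q.2.1 then U q.2.2
          else (Finset.univ : Finset (Fin n)))).card := hcount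
    _ ≤ Q.card * (((F.sup id).card + 1) ^ (2 * k) * n ^ (V.card - (k + 1))) := hsum
    _ ≤ (G.card * G.card * n ^ k) *
          (((F.sup id).card + 1) ^ (2 * k) * n ^ (V.card - (k + 1))) :=
        Nat.mul_le_mul_right _ hQcard
    _ = (G.card * G.card * ((F.sup id).card + 1) ^ (2 * k)) *
          (n ^ k * n ^ (V.card - (k + 1))) := by ring
    _ = (G.card * G.card * ((F.sup id).card + 1) ^ (2 * k)) * n ^ (V.card - 1) := by
        rw [hpow]
    _ ≤ (G.card * G.card * ((F.sup id).card + 1) ^ (2 * k) + 1) * n ^ (V.card - 1) :=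
        Nat.mul_le_mul_right _ (Nat.le_succ _)
end

section
/- Let H be an n-vertex r-uniform hypergraph (r > k ≥ 2) in which any two edges intersect in at most k-1 vertices and any 3r-2k+1 vertices span at most two edges. Let H* be the k-uniform hypergraph on V(H) whose edges are all k-subsets contained in some edge of H. Then H* contains no rainbow copy of the k-uniform tight triangle H_3^{(k)}, where each k-edge is colored by the (unique) r-edge of H containing it; i.e., there do not exist three distinct edges A_1, A_2, A_3 of H and a (k+1)-set S such that S contains three distinct k-subsets e_1, e_2, e_3 with e_i ⊆ A_i for each i. -/
open Finset

attribute [local instance] Classical.propDecidable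

/-- Let `H` be an `r`-uniform hypergraph (`r > k ≥ 2`) in which any two distinct edges
intersect in at most `k-1` vertices and any `3r-2k+1` vertices span at most two edges.
Then the `k`-uniform shadow hypergraph `H*` (all `k`-subsets of edges of `H`), colored by
the unique containing `r`-edge, has no rainbow tight triangle: there are no three
distinct edges `A₁, A₂, A₃` of `H` and a `(k+1)`-set `S` containing three distinct
`k`-subsets `e₁, e₂, e₃` with `eᵢ ⊆ Aᵢ`. -/
theorem stmt9 (r k : ℕ) (hk : 2 ≤ k) (hrk : k < r) (H : Finset (Finset ℕ))
    (hHu : ∀ A ∈ H, A.card = r)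
    (hint : ∀ A ∈ H, ∀ B ∈ H, A ≠ B → (A ∩ B).card ≤ k - 1)
    (hspan : ∀ R : Finset ℕ, R.card ≤ 3 * r - 2 * k + 1 →
      (H.filter (fun A => A ⊆ R)).card ≤ 2) :
    ¬ ∃ A₁ ∈ H, ∃ A₂ ∈ H, ∃ A₃ ∈ H, A₁ ≠ A₂ ∧ A₁ ≠ A₃ ∧ A₂ ≠ A₃ ∧
        ∃ S : Finset ℕ, S.card = k + 1 ∧
          ∃ e₁ e₂ e₃ : Finset ℕ,
            e₁ ⊆ S ∧ e₂ ⊆ S ∧ e₃ ⊆ S ∧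
            e₁.card = k ∧ e₂.card = k ∧ e₃.card = k ∧
            e₁ ≠ e₂ ∧ e₁ ≠ e₃ ∧ e₂ ≠ e₃ ∧
            e₁ ⊆ A₁ ∧ e₂ ⊆ A₂ ∧ e₃ ⊆ A₃ := by
  rintro ⟨A₁, hA₁, A₂, hA₂, A₃, hA₃, h12, h13, h23, S, hS, e₁, e₂, e₃,
    he₁S, he₂S, he₃S, hc₁, hc₂, hc₃, -, -, -, h1, h2, h3⟩
  have hdiff : ∀ (e A : Finset ℕ), e ⊆ S → e ⊆ A → e.card = k → A ∈ H →
      (A \ S).card ≤ r - k := by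
    intro e A heS heA hec hAH
    have hsub : e ⊆ A ∩ S := subset_inter heA heS
    have hk' : k ≤ (A ∩ S).card := hec ▸ card_le_card hsub
    have := card_sdiff_add_card_inter A S
    have hAr := hHu A hAH
    omega
  let R := S ∪ (A₁ \ S) ∪ (A₂ \ S) ∪ (A₃ \ S)
  have hRcard : R.card ≤ 3 * r - 2 * k + 1 := by
    show (S ∪ (A₁ \ S) ∪ (A₂ \ S) ∪ (A₃ \ S)).card ≤ 3 * r - 2 * k + 1
    have h1' := hdiff e₁ A₁ he₁S h1 hc₁ hA₁
    have h2' := hdiff e₂ A₂ he₂S h2 hc₂ hA₂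
    have h3' := hdiff e₃ A₃ he₃S h3 hc₃ hA₃
    have := card_union_le (S ∪ (A₁ \ S) ∪ (A₂ \ S)) (A₃ \ S)
    have := card_union_le (S ∪ (A₁ \ S)) (A₂ \ S)
    have := card_union_le S (A₁ \ S)
    have hk' : r - k + k = r := Nat.sub_add_cancel hrk.le
    omega
  have hsubR : ∀ A : Finset ℕ, A \ S ⊆ R → A ⊆ R := by
    intro A hA x hx
    by_cases hxS : x ∈ S
    · exact mem_union_left _ (mem_union_left _ (mem_union_left _ hxS))
    · exact hA (mem_sdiff.mpr ⟨hx, hxS⟩)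
  have hmem : ∀ A : Finset ℕ, A ∈ H → A \ S ⊆ R → A ∈ H.filter (fun A => A ⊆ R) := by
    intro A hAH hA
    exact mem_filter.mpr ⟨hAH, hsubR A hA⟩
  have m1 : A₁ ∈ H.filter (fun A => A ⊆ R) :=
    hmem A₁ hA₁ (fun x hx => mem_union_left _ (mem_union_left _ (mem_union_right _ hx)))
  have m2 : A₂ ∈ H.filter (fun A => A ⊆ R) :=
    hmem A₂ hA₂ (fun x hx => mem_union_left _ (mem_union_right _ hx))
  have m3 : A₃ ∈ H.filter (fun A => A ⊆ R) :=
    hmem A₃ hA₃ (fun x hx => mem_union_right _ hx)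
  have hsub3 : ({A₁, A₂, A₃} : Finset (Finset ℕ)) ⊆ H.filter (fun A => A ⊆ R) := by
    intro A hA
    simp only [mem_insert, mem_singleton] at hA
    rcases hA with rfl | rfl | rfl <;> assumption
  have hcard3 : ({A₁, A₂, A₃} : Finset (Finset ℕ)).card = 3 := by
    rw [card_insert_of_notMem (by simp [h12, h13]),
      card_insert_of_notMem (by simp [h23]), card_singleton]
  have := card_le_card hsub3
  have := hspan R hRcard
  omega
end
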